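/- Let M be a simple matroid of rank r ≥ 5 on C(r+1, 2) elements such that every rank-i flat F with 1 ≤ i ≤ r−1 satisfies |F| = C(i+1, 2) or |F| ≤ C(i, 2) + 1. Then M has at most r + 1 large hyperplanes (hyperplanes of size C(r, 2)); moreover the intersection of any two large hyperplanes is a large rank-(r−2) flat, and the intersections of a fixed large hyperplane with the other large hyperplanes are pairwise distinct. -/

import Mathlib

open Set Matroid
open scoped Matroid

namespace MatroidPaper

variable {α : Type*} {β : Type*}

/-- A circuit of a matroid is a minimal dependent set. -/
def Circuit (M : Matroid α) (C : Set α) : Prop := Minimal M.Dep C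

/-- A set is cyclic if it is a union of circuits. -/
def Cyclic (M : Matroid α) (X : Set α) : Prop :=
  ∃ S : Set (Set α), (∀ C ∈ S, Circuit M C) ∧ X = ⋃₀ S

/-- A cyclic flat is a flat that is a union of circuits. -/
def CyclicFlat (M : Matroid α) (F : Set α) : Prop := M.IsFlat F ∧ Cyclic M F

/-- The rank of a set in a matroid: the supremum of sizes of independent subsets. -/
noncomputable def rk (M : Matroid α) (X : Set α) : ℕ :=
  sSup {n | ∃ I, I ⊆ X ∧ M.Indep I ∧ I.ncard = n}

/-- `e` is a loop of `M`. -/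
def Loop (M : Matroid α) (e : α) : Prop := M.Dep {e}

/-- `e` is a coloop of `M`, i.e. a loop of the dual. -/
def Coloop (M : Matroid α) (e : α) : Prop := M✶.Dep {e}

/-- Deletion of a set of elements. -/
def delete (M : Matroid α) (D : Set α) : Matroid α := M ↾ (M.E \ D)

/-- Contraction of a set of elements. -/
def contract (M : Matroid α) (C : Set α) : Matroid α := (delete M✶ C)✶

open Classical in
/-- The Tutte polynomial of a (finite) matroid, as a polynomial in two
variables `X 0` (usually `x`) and `X 1` (usually `y`). -/
noncomputable def tutte (M : Matroid α) : MvPolynomial (Fin 2) ℤ :=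
  if hE : M.E.Finite then
    ∑ A ∈ hE.toFinset.powerset,
      (MvPolynomial.X 0 - 1) ^ (rk M M.E - rk M ↑A) *
        (MvPolynomial.X 1 - 1) ^ (A.card - rk M ↑A)
  else 0

/-- The coefficient of `x^i y^j` in the Tutte polynomial. -/
noncomputable def tcoeff (M : Matroid α) (i j : ℕ) : ℤ :=
  MvPolynomial.coeff (Finsupp.single 0 i + Finsupp.single 1 j) (tutte M)

/-- Matroid isomorphism. -/
def Iso (M : Matroid α) (N : Matroid β) : Prop :=
  ∃ (f : α → β) (hf : Set.InjOn f M.E), M.map f hf = N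

/-- A matroid is connected if it is nonempty and every two distinct elements
lie in a common circuit. -/
def Connected (M : Matroid α) : Prop :=
  M.E.Nonempty ∧ ∀ ⦃e f⦄, e ∈ M.E → f ∈ M.E → e ≠ f →
    ∃ C, Circuit M C ∧ e ∈ C ∧ f ∈ C

/-- The connected component of an element. -/
def component (M : Matroid α) (e : α) : Set α :=
  {f | f ∈ M.E ∧ Relation.ReflTransGen (fun x y => ∃ C, Circuit M C ∧ x ∈ C ∧ y ∈ C) e f}

/-- The number of connected components of a matroid. -/
noncomputable def numComponents (M : Matroid α) : ℕ :=
  Set.ncard {X : Set α | ∃ e ∈ M.E, X = component M e}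

/-- A matroid is simple if all sets of at most two elements of the ground set
are independent. -/
def Simple (M : Matroid α) : Prop :=
  ∀ ⦃e f⦄, e ∈ M.E → f ∈ M.E → M.Indep {e, f}

/-- A set of edges of a complete graph is a forest if no edge is a loop and
every nonempty subset uses more vertices than it has edges. -/
def IsForest {n : ℕ} (X : Set (Sym2 (Fin n))) : Prop :=
  (∀ e ∈ X, ¬ e.IsDiag) ∧
    ∀ Y ⊆ X, Y.Nonempty → Y.ncard < {v | ∃ e ∈ Y, v ∈ e}.ncard

/-- `M` is isomorphic to the cycle matroid of the complete graph `K n`. -/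
def IsCycleMatroidK (M : Matroid α) (n : ℕ) : Prop :=
  ∃ f : α → Sym2 (Fin n), Set.BijOn f M.E {e | ¬ e.IsDiag} ∧
    ∀ I ⊆ M.E, (M.Indep I ↔ IsForest (f '' I))


variable {M : Matroid α} {I J X Y F F' : Set α} {e : α}

lemma two_mul_choose_two (n : ℕ) : 2 * n.choose 2 = n * (n - 1) := by
  rcases n with _ | m
  · simp
  · rw [Nat.choose_two_right, Nat.succ_sub_one, Nat.mul_div_cancel']
    have := Nat.even_mul_succ_self m
    rw [mul_comm]
    exact this.two_dvd

lemma indep_ncard_le_basis' (hE : M.E.Finite) (hI : M.IsBasis' I X) (hJ : M.Indep J)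
    (hJX : J ⊆ X) : J.ncard ≤ I.ncard := by
  by_contra h
  push_neg at h
  have hIfin : I.Finite := hE.subset hI.indep.subset_ground
  have hJfin : J.Finite := hE.subset hJ.subset_ground
  have hlt : I.encard < J.encard := by
    rw [← hIfin.cast_ncard_eq, ← hJfin.cast_ncard_eq]
    exact_mod_cast h
  obtain ⟨e, he, hi⟩ := hI.indep.augment hJ hlt
  exact hI.insert_not_indep ⟨hJX he.1, he.2⟩ hi

lemma rk_bddAbove (hE : M.E.Finite) (X : Set α) :
    ∀ n ∈ {n | ∃ I, I ⊆ X ∧ M.Indep I ∧ I.ncard = n}, n ≤ M.E.ncard := by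
  rintro n ⟨J, hJX, hJ, rfl⟩
  exact Set.ncard_le_ncard hJ.subset_ground hE

lemma rk_eq_of_basis' (hE : M.E.Finite) (hI : M.IsBasis' I X) : rk M X = I.ncard := by
  apply le_antisymm
  · have hne : {n | ∃ I, I ⊆ X ∧ M.Indep I ∧ I.ncard = n}.Nonempty :=
      ⟨0, ∅, Set.empty_subset _, M.empty_indep, Set.ncard_empty _⟩
    apply csSup_le hne
    rintro n ⟨J, hJX, hJ, rfl⟩
    exact indep_ncard_le_basis' hE hI hJ hJX
  · exact le_csSup ⟨M.E.ncard, rk_bddAbove hE X⟩ ⟨I, hI.subset, hI.indep, rfl⟩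

lemma rk_mono (hE : M.E.Finite) (h : X ⊆ Y) : rk M X ≤ rk M Y := by
  obtain ⟨I, hI⟩ := M.exists_isBasis' X
  obtain ⟨J, hJ⟩ := M.exists_isBasis' Y
  rw [rk_eq_of_basis' hE hI, rk_eq_of_basis' hE hJ]
  exact indep_ncard_le_basis' hE hJ hI.indep (hI.subset.trans h)

lemma rk_lt_of_flat_ssubset (hE : M.E.Finite) (hF : M.IsFlat F) (hF' : M.IsFlat F')
    (hss : F ⊂ F') : rk M F < rk M F' := by
  obtain ⟨I, hI⟩ := M.exists_isBasis F hF.subset_ground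
  obtain ⟨J, hJ, hIJ⟩ := hI.indep.subset_isBasis_of_subset (hI.subset.trans hss.subset)
    hF'.subset_ground
  rw [rk_eq_of_basis' hE hI.isBasis', rk_eq_of_basis' hE hJ.isBasis']
  have hne : I ≠ J := by
    rintro rfl
    have h1 : F' ⊆ M.closure I := hJ.subset_closure
    have h2 : M.closure I ⊆ M.closure F := M.closure_subset_closure hI.subset
    rw [hF.closure] at h2
    exact hss.not_subset (h1.trans h2)
  exact Set.ncard_lt_ncard (hIJ.ssubset_of_ne hne) (hE.subset hJ.indep.subset_ground)

lemma flat_eq_of_subset_rk_le (hE : M.E.Finite) (hF : M.IsFlat F) (hF' : M.IsFlat F')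
    (hsub : F ⊆ F') (hrk : rk M F' ≤ rk M F) : F = F' := by
  by_contra hne
  exact absurd hrk (not_le.mpr (rk_lt_of_flat_ssubset hE hF hF' (hsub.ssubset_of_ne hne)))

lemma one_le_rk (hE : M.E.Finite) (hs : Simple M) (he : e ∈ X) (heE : e ∈ M.E) :
    1 ≤ rk M X := by
  have hi : M.Indep {e} := by
    have := hs heE heE
    rwa [Set.pair_eq_singleton] at this
  exact le_csSup ⟨M.E.ncard, rk_bddAbove hE X⟩
    ⟨{e}, Set.singleton_subset_iff.2 he, hi, Set.ncard_singleton e⟩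

lemma flat_inter (hF : M.IsFlat F) (hF' : M.IsFlat F') : M.IsFlat (F ∩ F') := by
  rw [Set.inter_eq_iInter]
  exact Matroid.IsFlat.iInter (fun b => by cases b <;> simpa)


lemma pair_inter (m : ℕ) (M : Matroid α)
    (hE : M.E.Finite) (hs : Simple M)
    (hcard : M.E.ncard = (m + 6).choose 2)
    (hflats : ∀ i : ℕ, 1 ≤ i → i ≤ m + 4 → ∀ F : Set α, M.IsFlat F → rk M F = i →
      F.ncard = (i + 1).choose 2 ∨ F.ncard ≤ i.choose 2 + 1)
    {H H' : Set α}
    (hH : M.IsFlat H ∧ rk M H = m + 4 ∧ H.ncard = (m + 5).choose 2)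
    (hH' : M.IsFlat H' ∧ rk M H' = m + 4 ∧ H'.ncard = (m + 5).choose 2)
    (hne : H ≠ H') :
    M.IsFlat (H ∩ H') ∧ rk M (H ∩ H') = m + 3 ∧ (H ∩ H').ncard = (m + 4).choose 2 := by
  obtain ⟨hHf, hHr, hHc⟩ := hH
  obtain ⟨hH'f, hH'r, hH'c⟩ := hH'
  have hHE := hHf.subset_ground
  have hH'E := hH'f.subset_ground
  have hHfin : H.Finite := hE.subset hHE
  have hH'fin : H'.Finite := hE.subset hH'E
  have hflatI : M.IsFlat (H ∩ H') := flat_inter hHf hH'f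
  -- cardinality lower bound
  have hIE := Set.ncard_union_add_ncard_inter H H' hHfin hH'fin
  have hUle : (H ∪ H').ncard ≤ M.E.ncard :=
    Set.ncard_le_ncard (Set.union_subset hHE hH'E) hE
  rw [hHc, hH'c] at hIE
  rw [hcard] at hUle
  -- numeric identities
  have h2a : 2 * (m + 6).choose 2 = (m + 6) * (m + 5) := by
    have := two_mul_choose_two (m + 6); simpa using this
  have h2b : 2 * (m + 5).choose 2 = (m + 5) * (m + 4) := by
    have := two_mul_choose_two (m + 5); simpa using this
  have h2c : 2 * (m + 4).choose 2 = (m + 4) * (m + 3) := by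
    have := two_mul_choose_two (m + 4); simpa using this
  have h2d : 2 * (m + 3).choose 2 = (m + 3) * (m + 2) := by
    have := two_mul_choose_two (m + 3); simpa using this
  have hxlb : (m + 5).choose 2 + (m + 5).choose 2 ≤ (m + 6).choose 2 + (H ∩ H').ncard := by
    omega
  have hx1 : 1 ≤ (H ∩ H').ncard := by nlinarith
  -- rank bounds
  obtain ⟨e, he⟩ := Set.nonempty_of_ncard_ne_zero (by omega : (H ∩ H').ncard ≠ 0)
  have hrk1 : 1 ≤ rk M (H ∩ H') := one_le_rk hE hs he (hHE he.1)
  have hssub : H ∩ H' ⊂ H := by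
    refine (Set.inter_subset_left).ssubset_of_ne fun hEq => hne ?_
    have hsub : H ⊆ H' := by rw [← Set.inter_eq_left]; exact hEq
    exact flat_eq_of_subset_rk_le hE hHf hH'f hsub (by rw [hHr, hH'r])
  have hrklt : rk M (H ∩ H') < m + 4 := hHr ▸ rk_lt_of_flat_ssubset hE hflatI hHf hssub
  have := hflats (rk M (H ∩ H')) hrk1 (by omega) (H ∩ H') hflatI rfl
  rcases this with hA | hB
  · -- F.ncard = (i+1).choose 2
    rcases Nat.lt_or_ge (rk M (H ∩ H')) (m + 3) with hi | hi
    · exfalso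
      have hle : (rk M (H ∩ H') + 1).choose 2 ≤ (m + 3).choose 2 :=
        Nat.choose_le_choose 2 (by omega)
      rw [hA] at hxlb
      nlinarith
    · have hieq : rk M (H ∩ H') = m + 3 := by omega
      rw [hieq] at hA
      exact ⟨hflatI, hieq, hA⟩
  · exfalso
    have hle : (rk M (H ∩ H')).choose 2 ≤ (m + 3).choose 2 :=
      Nat.choose_le_choose 2 (by omega)
    nlinarith

lemma final_numeric (K Mq : ℚ) (hM : 0 ≤ Mq) (hKge : Mq + 7 ≤ K)
    (CS : (K * ((Mq + 5) * (Mq + 4) / 2)) ^ 2 ≤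
      (Mq + 6) * (Mq + 5) / 2 *
        (K * ((Mq + 5) * (Mq + 4) / 2) + K * (K - 1) * ((Mq + 4) * (Mq + 3) / 2))) :
    False := by
  have hK0 : (0:ℚ) < K := by linarith
  have hpos : (0:ℚ) < K * ((Mq + 5) * (Mq + 4)) := by
    apply mul_pos hK0; nlinarith
  have hstep : K * ((Mq + 5) * (Mq + 4)) * (K * ((Mq + 5) * (Mq + 4)))
      ≤ K * ((Mq + 5) * (Mq + 4)) *
        ((Mq + 6) * (Mq + 5) + (K - 1) * (Mq + 6) * (Mq + 3)) := by
    ring_nf at CS ⊢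
    linarith
  have hfin := (mul_le_mul_iff_right₀ hpos).mp hstep
  nlinarith [hfin, hKge]


/-- a simple rank-`r` matroid (`r ≥ 5`) on `(r+1 choose 2)`
elements, in which every flat of rank `1 ≤ i ≤ r−1` has `(i+1 choose 2)` elements
or at most `(i choose 2) + 1` elements, has at most `r + 1` large hyperplanes;
the intersection of two large hyperplanes is a large rank-`(r−2)` flat, and the
intersections of a fixed large hyperplane with the others are pairwise
distinct. -/
theorem largeHyperplanes_bound (r : ℕ) (hr : 5 ≤ r) (M : Matroid α)
    (hE : M.E.Finite) (hs : Simple M) (hrk : rk M M.E = r)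
    (hcard : M.E.ncard = (r + 1).choose 2)
    (hflats : ∀ i : ℕ, 1 ≤ i → i ≤ r - 1 → ∀ F : Set α, M.IsFlat F → rk M F = i →
      F.ncard = (i + 1).choose 2 ∨ F.ncard ≤ i.choose 2 + 1) :
    Set.ncard {H : Set α | M.IsFlat H ∧ rk M H = r - 1 ∧ H.ncard = r.choose 2} ≤ r + 1 ∧
    (∀ H H' : Set α,
      (M.IsFlat H ∧ rk M H = r - 1 ∧ H.ncard = r.choose 2) →
      (M.IsFlat H' ∧ rk M H' = r - 1 ∧ H'.ncard = r.choose 2) → H ≠ H' →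
        M.IsFlat (H ∩ H') ∧ rk M (H ∩ H') = r - 2 ∧
          (H ∩ H').ncard = (r - 1).choose 2) ∧
    (∀ H H₁ H₂ : Set α,
      (M.IsFlat H ∧ rk M H = r - 1 ∧ H.ncard = r.choose 2) →
      (M.IsFlat H₁ ∧ rk M H₁ = r - 1 ∧ H₁.ncard = r.choose 2) →
      (M.IsFlat H₂ ∧ rk M H₂ = r - 1 ∧ H₂.ncard = r.choose 2) →
      H₁ ≠ H → H₂ ≠ H → H ∩ H₁ = H ∩ H₂ → H₁ = H₂) := by
  classical
  obtain ⟨m, rfl⟩ : ∃ m, r = m + 5 := ⟨r - 5, by omega⟩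
  simp only [show m + 5 - 1 = m + 4 from by omega, show m + 5 - 2 = m + 3 from by omega,
    show m + 5 + 1 = m + 6 from by omega] at *
  have hpair := fun {H H'} hH hH' hne => pair_inter m M hE hs hcard hflats (H := H) (H' := H') hH hH' hne
  -- numeric identities
  have h2a : 2 * (m + 6).choose 2 = (m + 6) * (m + 5) := by
    have := two_mul_choose_two (m + 6); simpa using this
  have h2b : 2 * (m + 5).choose 2 = (m + 5) * (m + 4) := by
    have := two_mul_choose_two (m + 5); simpa using this
  have h2c : 2 * (m + 4).choose 2 = (m + 4) * (m + 3) := by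
    have := two_mul_choose_two (m + 4); simpa using this
  -- Part 3 first
  have part3 : ∀ H H₁ H₂ : Set α,
      (M.IsFlat H ∧ rk M H = m + 4 ∧ H.ncard = (m + 5).choose 2) →
      (M.IsFlat H₁ ∧ rk M H₁ = m + 4 ∧ H₁.ncard = (m + 5).choose 2) →
      (M.IsFlat H₂ ∧ rk M H₂ = m + 4 ∧ H₂.ncard = (m + 5).choose 2) →
      H₁ ≠ H → H₂ ≠ H → H ∩ H₁ = H ∩ H₂ → H₁ = H₂ := by
    intro H H₁ H₂ hH hH₁ hH₂ hne1 hne2 heq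
    by_contra h12
    obtain ⟨-, -, hc1⟩ := hpair hH hH₁ (Ne.symm hne1)
    obtain ⟨-, -, hc12⟩ := hpair hH₁ hH₂ h12
    have hHfin : H.Finite := hE.subset hH.1.subset_ground
    have hH₁fin : H₁.Finite := hE.subset hH₁.1.subset_ground
    have hH₂fin : H₂.Finite := hE.subset hH₂.1.subset_ground
    have hsubF : H ∩ H₁ ⊆ H₁ ∩ H₂ := by
      intro x hx
      have hx2 : x ∈ H ∩ H₂ := heq ▸ hx
      exact ⟨hx.2, hx2.2⟩
    have hFeq : H ∩ H₁ = H₁ ∩ H₂ :=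
      Set.eq_of_subset_of_ncard_le hsubF (by rw [hc12, hc1]) (hH₁fin.inter_of_left _)
    have e1 := Set.ncard_union_add_ncard_inter H H₁ hHfin hH₁fin
    have e2 := Set.ncard_union_add_ncard_inter (H ∪ H₁) H₂ (hHfin.union hH₁fin) hH₂fin
    have e3 : (H ∪ H₁) ∩ H₂ = H ∩ H₁ := by
      rw [Set.union_inter_distrib_right, ← heq, ← hFeq, Set.union_self]
    rw [e3] at e2
    have e4 : ((H ∪ H₁) ∪ H₂).ncard ≤ M.E.ncard :=
      Set.ncard_le_ncard (Set.union_subset (Set.union_subset hH.1.subset_ground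
        hH₁.1.subset_ground) hH₂.1.subset_ground) hE
    rw [hcard] at e4
    rw [hH.2.2, hH₁.2.2] at e1
    rw [hH₂.2.2] at e2
    rw [hc1] at e1 e2
    nlinarith
  refine ⟨?_, fun H H' hH hH' hne => hpair hH hH' hne, part3⟩
  -- Part 1 : counting
  set S := {H : Set α | M.IsFlat H ∧ rk M H = m + 4 ∧ H.ncard = (m + 5).choose 2} with hS
  have hSfin : S.Finite :=
    hE.finite_subsets.subset (fun H hH => hH.1.subset_ground)
  by_contra hk
  push_neg at hk
  set 𝒮 : Finset (Set α) := hSfin.toFinset with h𝒮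
  have hcardS : S.ncard = 𝒮.card := Set.ncard_eq_toFinset_card _ hSfin
  have hmemS : ∀ {H}, H ∈ 𝒮 ↔ H ∈ S := fun {H} => hSfin.mem_toFinset
  set k := 𝒮.card with hkdef
  have hkge : m + 7 ≤ k := by omega
  set G : Finset α := hE.toFinset with hG
  have hGcard : G.card = (m + 6).choose 2 := by
    rw [← Set.ncard_eq_toFinset_card _ hE, hcard]
  have step1 : ∀ H ∈ 𝒮, (G.filter (fun e => e ∈ H)).card = H.ncard := by
    intro H hH
    have hHE : H ⊆ M.E := (hmemS.mp hH).1.subset_ground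
    have hHfin : H.Finite := hE.subset hHE
    rw [Set.ncard_eq_toFinset_card _ hHfin]
    congr 1
    ext x
    simp only [Finset.mem_filter, Set.Finite.mem_toFinset, hG]
    exact ⟨fun h => h.2, fun h => ⟨hHE h, h⟩⟩
  have step2 : ∀ H ∈ 𝒮, ∀ H' ∈ 𝒮,
      (G.filter (fun e => e ∈ H ∧ e ∈ H')).card = (H ∩ H').ncard := by
    intro H hH H' hH'
    have hHE : H ⊆ M.E := (hmemS.mp hH).1.subset_ground
    have hfin : (H ∩ H').Finite := (hE.subset hHE).inter_of_left _
    rw [Set.ncard_eq_toFinset_card _ hfin]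
    congr 1
    ext x
    simp only [Finset.mem_filter, Set.Finite.mem_toFinset, Set.mem_inter_iff, hG]
    exact ⟨fun h => h.2, fun h => ⟨hHE h.1, h⟩⟩
  set t : α → ℕ := fun e => (𝒮.filter (fun H => e ∈ H)).card with ht
  have sum_t : ∑ e ∈ G, t e = k * (m + 5).choose 2 := by
    calc ∑ e ∈ G, t e = ∑ e ∈ G, ∑ H ∈ 𝒮, if e ∈ H then 1 else 0 :=
          Finset.sum_congr rfl fun e _ => Finset.card_filter _ _
      _ = ∑ H ∈ 𝒮, ∑ e ∈ G, if e ∈ H then 1 else 0 := Finset.sum_comm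
      _ = ∑ H ∈ 𝒮, H.ncard := Finset.sum_congr rfl fun H hH => by
          rw [← Finset.card_filter]; exact step1 H hH
      _ = ∑ _H ∈ 𝒮, (m + 5).choose 2 := Finset.sum_congr rfl fun H hH => by
          rw [(hmemS.mp hH).2.2]
      _ = k * (m + 5).choose 2 := by rw [Finset.sum_const, smul_eq_mul]
  have sum_t2 : ∑ e ∈ G, t e * t e
      = k * (m + 5).choose 2 + k * (k - 1) * (m + 4).choose 2 := by
    have swap : ∑ e ∈ G, t e * t e = ∑ H ∈ 𝒮, ∑ H' ∈ 𝒮, (H ∩ H').ncard := by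
      calc ∑ e ∈ G, t e * t e
          = ∑ e ∈ G, ∑ H ∈ 𝒮, ∑ H' ∈ 𝒮, if e ∈ H ∧ e ∈ H' then 1 else 0 := by
            refine Finset.sum_congr rfl fun e _ => ?_
            rw [ht]
            simp only [Finset.card_filter]
            rw [Finset.sum_mul_sum]
            refine Finset.sum_congr rfl fun H _ => Finset.sum_congr rfl fun H' _ => ?_
            by_cases h1 : e ∈ H <;> by_cases h2 : e ∈ H' <;> simp [h1, h2]
        _ = ∑ H ∈ 𝒮, ∑ e ∈ G, ∑ H' ∈ 𝒮, if e ∈ H ∧ e ∈ H' then 1 else 0 := Finset.sum_comm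
        _ = ∑ H ∈ 𝒮, ∑ H' ∈ 𝒮, ∑ e ∈ G, if e ∈ H ∧ e ∈ H' then 1 else 0 :=
            Finset.sum_congr rfl fun H _ => Finset.sum_comm
        _ = ∑ H ∈ 𝒮, ∑ H' ∈ 𝒮, (H ∩ H').ncard :=
            Finset.sum_congr rfl fun H hH => Finset.sum_congr rfl fun H' hH' => by
              rw [← Finset.card_filter]; exact step2 H hH H' hH'
    rw [swap]
    have inner : ∀ H ∈ 𝒮, ∑ H' ∈ 𝒮, (H ∩ H').ncard
        = (m + 5).choose 2 + (k - 1) * (m + 4).choose 2 := by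
      intro H hH
      rw [← Finset.add_sum_erase 𝒮 _ hH, Set.inter_self, (hmemS.mp hH).2.2]
      congr 1
      calc ∑ H' ∈ 𝒮.erase H, (H ∩ H').ncard
          = ∑ _H' ∈ 𝒮.erase H, (m + 4).choose 2 := by
            refine Finset.sum_congr rfl fun H' hH' => ?_
            exact (hpair (hmemS.mp hH) (hmemS.mp (Finset.mem_of_mem_erase hH'))
              (Ne.symm (Finset.ne_of_mem_erase hH'))).2.2
        _ = (k - 1) * (m + 4).choose 2 := by
            rw [Finset.sum_const, smul_eq_mul, Finset.card_erase_of_mem hH]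
    rw [Finset.sum_congr rfl inner, Finset.sum_const, smul_eq_mul]
    ring
  -- Cauchy–Schwarz
  have CS : (∑ e ∈ G, (t e : ℚ)) ^ 2 ≤ (G.card : ℚ) * ∑ e ∈ G, (t e : ℚ) ^ 2 :=
    sq_sum_le_card_mul_sum_sq
  have cast1 : (∑ e ∈ G, (t e : ℚ)) = ((∑ e ∈ G, t e : ℕ) : ℚ) := by push_cast; ring
  have cast2 : (∑ e ∈ G, (t e : ℚ) ^ 2) = ((∑ e ∈ G, t e * t e : ℕ) : ℚ) := by
    push_cast
    exact Finset.sum_congr rfl fun x _ => pow_two _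
  rw [cast1, cast2, sum_t, sum_t2, hGcard] at CS
  have hk1 : (1:ℕ) ≤ k := by omega
  have castk : ((k - 1 : ℕ) : ℚ) = (k:ℚ) - 1 := by
    rw [Nat.cast_sub hk1]; norm_num
  have hA : (((m + 6).choose 2 : ℕ) : ℚ) = ((m:ℚ) + 6) * ((m:ℚ) + 5) / 2 := by
    have h2a' : (m + 6).choose 2 * 2 = (m + 6) * (m + 5) := by omega
    field_simp
    exact_mod_cast h2a'
  have hB : (((m + 5).choose 2 : ℕ) : ℚ) = ((m:ℚ) + 5) * ((m:ℚ) + 4) / 2 := by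
    have h2b' : (m + 5).choose 2 * 2 = (m + 5) * (m + 4) := by omega
    field_simp
    exact_mod_cast h2b'
  have hC : (((m + 4).choose 2 : ℕ) : ℚ) = ((m:ℚ) + 4) * ((m:ℚ) + 3) / 2 := by
    have h2c' : (m + 4).choose 2 * 2 = (m + 4) * (m + 3) := by omega
    field_simp
    exact_mod_cast h2c'
  push_cast [castk] at CS
  rw [hA, hB, hC] at CS
  exact final_numeric (k:ℚ) (m:ℚ) (Nat.cast_nonneg m) (by exact_mod_cast hkge) CS

end MatroidPaper
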